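/- arXiv:1604.08152 — 2 statements merged into one kernel-verified Lean document; each statement's English description precedes it below -/
import Mathlib

section
/- Every formal power series f(t) over the integers with constant term 1 admits a unique factorization f(t) = ∏_{m≥1} (1 - t^m)^{s(m)} as a (possibly infinite) product over positive integers m, with uniquely determined integer exponents s(m). -/
/-! Since `(1 - ε) ^ s ≡ 1 - s • ε` modulo `ε²` for every integer `s`, multiplying by
`(1 - tᵐ) ^ s` leaves the coefficients of degree `< m` unchanged and lowers the coefficient of
degree `m` by `s`. So the coefficient of `tⁿ` in `∏_{m ≤ n} (1 - tᵐ) ^ s(m)` is that of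
`∏_{m < n} (1 - tᵐ) ^ s(m)` minus `s(n)`, and matching the coefficients of `f` degree by degree
determines `s(n)` recursively, in exactly one way. -/

/-- The unit `1 - tᵐ` of `ℤ[[t]]` (for `m ≥ 1`); for `m = 0` we set it to `1`. -/
noncomputable def binomUnit (m : ℕ) : (PowerSeries ℤ)ˣ := by
  classical
  exact if h : IsUnit ((1 : PowerSeries ℤ) - PowerSeries.X ^ m) then h.unit else 1

open PowerSeries Finset

theorem Units.dvd_val_zpow_sub_of_dvd_sq {R : Type*} [CommRing R] {u : Rˣ} {d ε : R}
    (hu : (u : R) = 1 - ε) (hd : d ∣ ε ^ 2) (s : ℤ) :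
    d ∣ ((u ^ s : Rˣ) : R) - (1 - s • ε) := by
  induction s using Int.induction_on with
  | zero => simp
  | succ k ih =>
    have key : ((u ^ ((k : ℤ) + 1) : Rˣ) : R) - (1 - ((k : ℤ) + 1) • ε) =
        (((u ^ (k : ℤ) : Rˣ) : R) - (1 - (k : ℤ) • ε)) * u + k * ε ^ 2 := by
      rw [zpow_add_one, Units.val_mul, hu]
      simp only [zsmul_eq_mul]
      push_cast
      ring
    rw [key]
    exact dvd_add (dvd_mul_of_dvd_left ih _) (hd.mul_left _)
  | pred k ih =>
    have key : (((u ^ (-(k : ℤ) - 1) : Rˣ) : R) - (1 - (-(k : ℤ) - 1) • ε)) * u =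
        ((u ^ (-(k : ℤ)) : Rˣ) : R) - (1 - (-(k : ℤ)) • ε) + (k + 1) * ε ^ 2 := by
      rw [sub_mul, ← Units.val_mul, ← zpow_add_one, sub_add_cancel, hu]
      simp only [zsmul_eq_mul]
      push_cast
      ring
    rw [← Units.dvd_mul_right, key]
    exact dvd_add ih (hd.mul_left _)

theorem PowerSeries.coeff_eq_of_X_pow_dvd_sub {R : Type*} [CommRing R] {a b : R⟦X⟧} {n : ℕ}
    (h : X ^ (n + 1) ∣ a - b) : coeff n a = coeff n b := by
  rw [← sub_eq_zero, ← map_sub]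
  exact X_pow_dvd_iff.mp h n n.lt_succ_self

theorem binomUnit_val {m : ℕ} (hm : m ≠ 0) : (binomUnit m : ℤ⟦X⟧) = 1 - X ^ m := by
  have h : IsUnit ((1 : ℤ⟦X⟧) - X ^ m) := by
    simp [isUnit_iff_constantCoeff, hm]
  rw [binomUnit, dif_pos h, IsUnit.unit_spec]

theorem X_pow_succ_dvd_binomUnit_zpow_sub {m : ℕ} (hm : m ≠ 0) (s : ℤ) :
    X ^ (m + 1) ∣ (↑(binomUnit m ^ s) : ℤ⟦X⟧) - (1 - s • X ^ m) :=
  Units.dvd_val_zpow_sub_of_dvd_sq (binomUnit_val hm)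
    (by rw [← pow_mul]; exact pow_dvd_pow _ (by omega)) s

theorem constantCoeff_binomUnit_zpow {m : ℕ} (hm : m ≠ 0) (s : ℤ) :
    constantCoeff (↑(binomUnit m ^ s) : ℤ⟦X⟧) = 1 := by
  rw [← coeff_zero_eq_constantCoeff_apply,
    coeff_eq_of_X_pow_dvd_sub (dvd_trans (pow_dvd_pow _ (by omega))
      (X_pow_succ_dvd_binomUnit_zpow_sub hm s))]
  simp [hm]

noncomputable def binomProd (s : ℕ → ℤ) (n : ℕ) : ℤ⟦X⟧ˣ :=
  ∏ m ∈ Icc 1 n, binomUnit m ^ s m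

theorem binomProd_congr {s t : ℕ → ℤ} {n : ℕ} (h : ∀ m ≤ n, s m = t m) :
    binomProd s n = binomProd t n :=
  prod_congr rfl fun m hm => by rw [h m (mem_Icc.mp hm).2]

theorem constantCoeff_binomProd (s : ℕ → ℤ) (n : ℕ) :
    constantCoeff (binomProd s n : ℤ⟦X⟧) = 1 := by
  rw [binomProd, Units.coe_prod, map_prod]
  exact prod_eq_one fun m hm => constantCoeff_binomUnit_zpow (by grind) (s m)

theorem binomProd_succ (s : ℕ → ℤ) (n : ℕ) :
    binomProd s (n + 1) = binomProd s n * binomUnit (n + 1) ^ s (n + 1) :=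
  prod_Icc_succ_top n.succ_pos' _

theorem coeff_binomProd_succ (s : ℕ → ℤ) (n : ℕ) :
    coeff (n + 1) (binomProd s (n + 1) : ℤ⟦X⟧) =
      coeff (n + 1) (binomProd s n : ℤ⟦X⟧) - s (n + 1) := by
  have h : X ^ (n + 2) ∣ (binomProd s (n + 1) : ℤ⟦X⟧) -
      (binomProd s n : ℤ⟦X⟧) * (1 - s (n + 1) • X ^ (n + 1)) := by
    rw [binomProd_succ, Units.val_mul, ← mul_sub]
    exact dvd_mul_of_dvd_right (X_pow_succ_dvd_binomUnit_zpow_sub n.succ_ne_zero _) _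
  rw [coeff_eq_of_X_pow_dvd_sub h, mul_sub, mul_one, mul_smul_comm, map_sub, map_zsmul,
    coeff_mul_X_pow', if_pos le_rfl, Nat.sub_self, coeff_zero_eq_constantCoeff_apply,
    constantCoeff_binomProd, smul_eq_mul, mul_one]

theorem coeff_succ_eq_coeff_binomProd_iff (f : ℤ⟦X⟧) (s : ℕ → ℤ) (n : ℕ) :
    coeff (n + 1) f = coeff (n + 1) (binomProd s (n + 1) : ℤ⟦X⟧) ↔
      s (n + 1) = coeff (n + 1) (binomProd s n : ℤ⟦X⟧) - coeff (n + 1) f := by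
  rw [coeff_binomProd_succ]
  omega

noncomputable def binomExponent (f : ℤ⟦X⟧) : ℕ → ℤ
  | 0 => 0
  | n + 1 =>
    coeff (n + 1) (↑(∏ m ∈ (Icc 1 n).attach, binomUnit m ^ binomExponent f m) : ℤ⟦X⟧) -
      coeff (n + 1) f
  decreasing_by exact Nat.lt_succ_of_le (mem_Icc.mp m.2).2

theorem binomExponent_succ (f : ℤ⟦X⟧) (n : ℕ) :
    binomExponent f (n + 1) =
      coeff (n + 1) (binomProd (binomExponent f) n : ℤ⟦X⟧) - coeff (n + 1) f := by
  rw [binomExponent, binomProd, prod_attach (Icc 1 n) fun m => binomUnit m ^ binomExponent f m]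

/-- Every `f ∈ ℤ[[t]]` with constant term `1` admits a unique factorization
`f = ∏_{m ≥ 1} (1 - tᵐ)^{s(m)}` with integer exponents `s(m)`; the infinite product is
interpreted coefficientwise: in each degree `n` only the factors with `1 ≤ m ≤ n` contribute. -/
theorem unique_binomial_factorization (f : PowerSeries ℤ)
    (hf : PowerSeries.constantCoeff f = 1) :
    ∃! s : ℕ → ℤ, s 0 = 0 ∧ ∀ n : ℕ,
      PowerSeries.coeff n f =
        PowerSeries.coeff n
          ((∏ m ∈ Finset.Icc 1 n, binomUnit m ^ s m : (PowerSeries ℤ)ˣ) : PowerSeries ℤ) := by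
  refine ⟨binomExponent f, ⟨by rw [binomExponent], fun n => ?_⟩, ?_⟩
  · cases n with
    | zero => simp [hf]
    | succ n => exact (coeff_succ_eq_coeff_binomProd_iff f _ n).mpr (binomExponent_succ f n)
  · rintro s ⟨hs0, hs⟩
    funext n
    induction n using Nat.strong_induction_on with
    | _ n ih =>
      cases n with
      | zero => rw [hs0, binomExponent]
      | succ n =>
        rw [(coeff_succ_eq_coeff_binomProd_iff f s n).mp (hs (n + 1)), binomExponent_succ,
          binomProd_congr fun m hm => ih m (by omega)]
end

section
/- Every formal power series f(t₁,…,t_r) over ℤ in r variables with constant term 1 admits a unique factorization f = ∏_{m ∈ ℤ_{≥0}^r \ {0}} (1 - t^m)^{s(m)} with integer exponents s(m), where t^m denotes t₁^{m₁}⋯t_r^{m_r}. -/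
/-!
Since `(1 - tⁿ)ᵏ ≡ 1 - k tⁿ` modulo `t²ⁿ` and every factor has constant term `1`, the
coefficient of `tⁿ` in `∏_{0 ≠ m ≤ n} (1 - tᵐ)^{s(m)}` is the coefficient of `tⁿ` in the
product over `0 ≠ m < n`, minus `s(n)`. Matching it with the coefficient of `f` determines
`s(n)` from the `s(m)` with `m < n`, so the exponents exist and are unique by well-founded
recursion on multi-indices.
-/

/-- The unit `1 - tᵐ` of `ℤ[[t₁,…]]` for a nonzero multi-index `m`; for `m = 0` we set it to `1`. -/
noncomputable def mvBinomUnit {σ : Type*} (m : σ →₀ ℕ) : (MvPowerSeries σ ℤ)ˣ := by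
  classical
  exact if h : IsUnit ((1 : MvPowerSeries σ ℤ) - MvPowerSeries.monomial m 1) then h.unit else 1

theorem WellFoundedLT.existsUnique_recursion {α β : Type*} [Preorder α] [WellFoundedLT α]
    [Nonempty β] (F : α → (α → β) → β) (hF : ∀ n s t, (∀ m < n, s m = t m) → F n s = F n t) :
    ∃! s : α → β, ∀ n, s n = F n s := by
  classical
  refine ⟨wellFounded_lt.fix fun n rec => F n fun m => if h : m < n then rec m h else
    Classical.arbitrary β, fun n => ?_, fun t ht => ?_⟩
  · rw [WellFounded.fix_eq]
    exact hF _ _ _ fun m hm => dif_pos hm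
  · funext n
    induction n using WellFoundedLT.induction with
    | ind n ih =>
      rw [ht n, WellFounded.fix_eq]
      exact hF _ _ _ fun m hm => by rw [dif_pos hm]; exact ih m hm

theorem Units.val_zpow_sub_mem_span_sq {R : Type*} [CommRing R] {u : Rˣ} {x : R}
    (hu : (u : R) = 1 - x) (k : ℤ) :
    ((u ^ k : Rˣ) : R) - (1 - k * x) ∈ Ideal.span {x ^ 2} := by
  have hx2 : x ^ 2 ∈ Ideal.span {x ^ 2} := Ideal.mem_span_singleton_self _
  induction k using Int.induction_on with
  | zero => simp
  | succ k ih =>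
    have h : ((u ^ ((k : ℤ) + 1) : Rˣ) : R) - (1 - ↑((k : ℤ) + 1) * x)
        = (((u ^ (k : ℤ) : Rˣ) : R) - (1 - (k : ℤ) * x)) * u + k * x ^ 2 := by
      rw [zpow_add_one, Units.val_mul, hu]; push_cast; ring
    rw [h]
    exact Ideal.add_mem _ (Ideal.mul_mem_right _ _ ih) (Ideal.mul_mem_left _ _ hx2)
  | pred k ih =>
    have hinv : ((u⁻¹ : Rˣ) : R) * (1 - x) = 1 := by rw [← hu, Units.inv_mul]
    have h : ((u ^ (-(k : ℤ) - 1) : Rˣ) : R) - (1 - ↑(-(k : ℤ) - 1) * x)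
        = (((u ^ (-(k : ℤ)) : Rˣ) : R) - (1 - ↑(-(k : ℤ)) * x)) * ↑u⁻¹
          + ↑u⁻¹ * (k + 1) * x ^ 2 := by
      rw [zpow_sub_one, Units.val_mul]; push_cast
      linear_combination (1 + (k + 1) * x) * hinv
    rw [h]
    exact Ideal.add_mem _ (Ideal.mul_mem_right _ _ ih) (Ideal.mul_mem_left _ _ hx2)

section

open MvPowerSeries

variable {σ : Type*}

theorem mvBinomUnit_val {m : σ →₀ ℕ} (hm : m ≠ 0) :
    (mvBinomUnit m : MvPowerSeries σ ℤ) = 1 - monomial m 1 := by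
  classical
  have hc : constantCoeff (monomial m (1 : ℤ)) = 0 := by
    rw [← coeff_zero_eq_constantCoeff_apply, coeff_monomial, if_neg hm.symm]
  have h : IsUnit ((1 : MvPowerSeries σ ℤ) - monomial m 1) := by
    rw [isUnit_iff_constantCoeff, map_sub, map_one, hc, sub_zero]
    exact isUnit_one
  rw [mvBinomUnit, dif_pos h, IsUnit.unit_spec]

theorem constantCoeff_mvBinomUnit (m : σ →₀ ℕ) :
    constantCoeff (mvBinomUnit m : MvPowerSeries σ ℤ) = 1 := by
  classical
  by_cases hm : m = 0
  · rw [mvBinomUnit, dif_neg (by simp [hm]), Units.val_one, map_one]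
  · rw [mvBinomUnit_val hm, map_sub, map_one, ← coeff_zero_eq_constantCoeff_apply,
      coeff_monomial, if_neg (Ne.symm hm), sub_zero]

theorem constantCoeff_prod_mvBinomUnit_zpow (T : Finset (σ →₀ ℕ)) (s : (σ →₀ ℕ) → ℤ) :
    constantCoeff ((∏ m ∈ T, mvBinomUnit m ^ s m : (MvPowerSeries σ ℤ)ˣ) :
      MvPowerSeries σ ℤ) = 1 := by
  have h : Units.map (constantCoeff : MvPowerSeries σ ℤ →+* ℤ).toMonoidHom
      (∏ m ∈ T, mvBinomUnit m ^ s m) = 1 := by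
    refine (map_prod _ _ _).trans (Finset.prod_eq_one fun m _ => ?_)
    have hm : Units.map (constantCoeff : MvPowerSeries σ ℤ →+* ℤ).toMonoidHom (mvBinomUnit m) = 1 :=
      Units.ext (constantCoeff_mvBinomUnit m)
    rw [map_zpow, hm, one_zpow]
  exact congrArg Units.val h

theorem coeff_mul_mvBinomUnit_zpow_self {n : σ →₀ ℕ} (hn : n ≠ 0) (P : MvPowerSeries σ ℤ)
    (k : ℤ) :
    coeff n (P * ((mvBinomUnit n ^ k : (MvPowerSeries σ ℤ)ˣ) : MvPowerSeries σ ℤ))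
      = coeff n P - k * constantCoeff P := by
  obtain ⟨g, hg⟩ := Ideal.mem_span_singleton'.mp
    (Units.val_zpow_sub_mem_span_sq (mvBinomUnit_val hn) k)
  have hnn : ¬ n + n ≤ n := by
    rw [add_le_iff_nonpos_right, nonpos_iff_eq_zero]; exact hn
  rw [← sub_add_cancel ((mvBinomUnit n ^ k : (MvPowerSeries σ ℤ)ˣ) : MvPowerSeries σ ℤ)
      (1 - (k : MvPowerSeries σ ℤ) * monomial n 1), ← hg, monomial_pow, two_nsmul]
  have hk : (k : MvPowerSeries σ ℤ) * monomial n 1 = monomial n k := by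
    rw [← map_intCast (C (σ := σ) (R := ℤ)), ← monomial_zero_eq_C_apply, monomial_mul_monomial,
      zero_add, mul_one, Int.cast_id]
  rw [hk, mul_add, mul_sub, mul_one, ← mul_assoc, map_add, map_sub, coeff_mul_monomial,
    coeff_mul_monomial, if_neg hnn, if_pos le_rfl, tsub_self, coeff_zero_eq_constantCoeff_apply]
  ring

variable [DecidableEq σ]

theorem coeff_prod_Iic_erase_zero_mvBinomUnit_zpow {n : σ →₀ ℕ} (hn : n ≠ 0)
    (s : (σ →₀ ℕ) → ℤ) :
    coeff n ((∏ m ∈ (Finset.Iic n).erase 0, mvBinomUnit m ^ s m : (MvPowerSeries σ ℤ)ˣ) :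
        MvPowerSeries σ ℤ)
      = coeff n ((∏ m ∈ (Finset.Iio n).erase 0, mvBinomUnit m ^ s m : (MvPowerSeries σ ℤ)ˣ) :
          MvPowerSeries σ ℤ) - s n := by
  have hn' : n ∉ (Finset.Iio n).erase 0 := fun h =>
    lt_irrefl n (Finset.mem_Iio.mp (Finset.mem_of_mem_erase h))
  rw [← Finset.Iio_insert, Finset.erase_insert_of_ne hn, Finset.prod_insert hn', Units.val_mul,
    mul_comm, coeff_mul_mvBinomUnit_zpow_self hn, constantCoeff_prod_mvBinomUnit_zpow, mul_one]

/-- The exponent at `n` forced by the factorization of `f`, given the exponents `s m`, `m < n`. -/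
noncomputable def mvBinomExponentStep (f : MvPowerSeries σ ℤ) (n : σ →₀ ℕ)
    (s : (σ →₀ ℕ) → ℤ) : ℤ :=
  if n = 0 then 0 else
    coeff n ((∏ m ∈ (Finset.Iio n).erase 0, mvBinomUnit m ^ s m : (MvPowerSeries σ ℤ)ˣ) :
      MvPowerSeries σ ℤ) - coeff n f

theorem mvBinomExponentStep_congr (f : MvPowerSeries σ ℤ) {n : σ →₀ ℕ} {s t : (σ →₀ ℕ) → ℤ}
    (hst : ∀ m < n, s m = t m) : mvBinomExponentStep f n s = mvBinomExponentStep f n t := by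
  unfold mvBinomExponentStep
  congr 4
  exact Finset.prod_congr rfl fun m hm =>
    by rw [hst m (Finset.mem_Iio.mp (Finset.mem_of_mem_erase hm))]

theorem factorization_iff_forall_eq_mvBinomExponentStep {f : MvPowerSeries σ ℤ}
    (hf : constantCoeff f = 1) (s : (σ →₀ ℕ) → ℤ) :
    (s 0 = 0 ∧ ∀ n, coeff n f = coeff n ((∏ m ∈ (Finset.Iic n).erase 0, mvBinomUnit m ^ s m :
        (MvPowerSeries σ ℤ)ˣ) : MvPowerSeries σ ℤ)) ↔
      ∀ n, s n = mvBinomExponentStep f n s := by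
  have hcoeff_zero : coeff 0 f = coeff 0 ((∏ m ∈ (Finset.Iic 0).erase 0, mvBinomUnit m ^ s m :
      (MvPowerSeries σ ℤ)ˣ) : MvPowerSeries σ ℤ) := by
    rw [coeff_zero_eq_constantCoeff_apply, coeff_zero_eq_constantCoeff_apply, hf,
      constantCoeff_prod_mvBinomUnit_zpow]
  constructor
  · rintro ⟨hs0, hs⟩ n
    by_cases hn : n = 0
    · rw [hn, hs0, mvBinomExponentStep, if_pos rfl]
    · rw [mvBinomExponentStep, if_neg hn, hs n, coeff_prod_Iic_erase_zero_mvBinomUnit_zpow hn]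
      ring
  · intro hs
    refine ⟨by rw [hs 0, mvBinomExponentStep, if_pos rfl], fun n => ?_⟩
    by_cases hn : n = 0
    · rw [hn]; exact hcoeff_zero
    · rw [coeff_prod_Iic_erase_zero_mvBinomUnit_zpow hn, hs n, mvBinomExponentStep, if_neg hn]
      ring

end

/-- Every `f ∈ ℤ[[t₁,…,t_r]]` with constant term `1` admits a unique factorization
`f = ∏_{m ∈ ℤ_{≥0}^r \ {0}} (1 - tᵐ)^{s(m)}` with integer exponents `s(m)`; the infinite
product is interpreted coefficientwise: the coefficient at a multi-index `n` only involves
the factors with multi-index `0 ≠ m ≤ n`. -/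
theorem unique_mv_binomial_factorization (r : ℕ) (f : MvPowerSeries (Fin r) ℤ)
    (hf : MvPowerSeries.constantCoeff f = 1) :
    ∃! s : (Fin r →₀ ℕ) → ℤ, s 0 = 0 ∧ ∀ n : Fin r →₀ ℕ,
      MvPowerSeries.coeff n f =
        MvPowerSeries.coeff n
          ((∏ m ∈ (Finset.Iic n).erase 0, mvBinomUnit m ^ s m :
            (MvPowerSeries (Fin r) ℤ)ˣ) : MvPowerSeries (Fin r) ℤ) :=
  (existsUnique_congr (factorization_iff_forall_eq_mvBinomExponentStep hf)).mpr
    (WellFoundedLT.existsUnique_recursion _ fun _ _ _ =>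
      mvBinomExponentStep_congr f)
end
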